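/- For every forecasting system F, the set of sequences for which F is high-low calibrated is not residual in Cantor space; equivalently, no forecasting system is high-low calibrated on a comeagre set of data sequences. -/
import Mathlib


open Filter Topology

/-- The forecast probability on day `k` for data sequence `a`:
`F` applied to the first `k` bits of `a`. -/
noncomputable def fc (F : List Bool → ℝ) (a : ℕ → Bool) (k : ℕ) : ℝ :=
  F (List.ofFn (fun i : Fin k => a i))

/-- The discrepancy on day `k`: `a_k - π_k`. -/
noncomputable def disc (F : List Bool → ℝ) (a : ℕ → Bool) (k : ℕ) : ℝ :=
  (if a k then 1 else 0) - fc F a k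

open Classical in
/-- Mean discrepancy over the days `k < n` satisfying `P`. -/
noncomputable def avgDisc (F : List Bool → ℝ) (a : ℕ → Bool) (P : ℕ → Prop) (n : ℕ) : ℝ :=
  (∑ k ∈ (Finset.range n).filter P, disc F a k) /
    (((Finset.range n).filter P).card : ℝ)

/-- `F` is high-low calibrated for `a`: for each of the two groups of days
(forecast `≥ 1/2`, forecast `< 1/2`), either the group is finite or the mean
discrepancy over that group among the first `n` days tends to `0`. -/
def HighLowCalibrated (F : List Bool → ℝ) (a : ℕ → Bool) : Prop :=
  ({k | 1/2 ≤ fc F a k}.Finite ∨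
      Tendsto (avgDisc F a (fun k => 1/2 ≤ fc F a k)) atTop (𝓝 0)) ∧
  ({k | fc F a k < 1/2}.Finite ∨
      Tendsto (avgDisc F a (fun k => fc F a k < 1/2)) atTop (𝓝 0))

open Classical in
/-- The adversarial sequence against `F`: `a_k = 1` iff the forecast is `< 1/2`. -/
noncomputable def adv (F : List Bool → ℝ) : ℕ → Bool
  | k => if F (List.ofFn (fun i : Fin k => adv F i)) < 1/2 then true else false

/-! ### Auxiliary material -/

open Classical in
/-- The adversarial continuation of `a` after time `m`. -/
noncomputable def advFrom (F : List Bool → ℝ) (a : ℕ → Bool) (m : ℕ) : ℕ → Bool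
  | k => if k < m then a k
    else if F (List.ofFn (fun i : Fin k => advFrom F a m i)) < 1/2 then true else false

section Aux

open Classical

variable (F : List Bool → ℝ)

lemma fc_congr {a b : ℕ → Bool} {k : ℕ} (h : ∀ i < k, a i = b i) :
    fc F a k = fc F b k := by
  exact congrArg F (congrArg List.ofFn (funext fun i => h i i.2))

lemma disc_congr {a b : ℕ → Bool} {k : ℕ} (h : ∀ i ≤ k, a i = b i) :
    disc F a k = disc F b k := by
  unfold disc
  rw [h k le_rfl, fc_congr F (fun i hi => h i hi.le)]

lemma filterHL_congr {a b : ℕ → Bool} {n : ℕ} (Q : ℝ → Prop)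
    (h : ∀ i < n, a i = b i) :
    (Finset.range n).filter (fun k => Q (fc F a k)) =
      (Finset.range n).filter (fun k => Q (fc F b k)) := by
  apply Finset.filter_congr
  intro k hk
  rw [fc_congr F (fun i hi => h i (hi.trans (Finset.mem_range.1 hk)))]

lemma avgDisc_congr {a b : ℕ → Bool} {n : ℕ} (Q : ℝ → Prop)
    (h : ∀ i < n, a i = b i) :
    avgDisc F a (fun k => Q (fc F a k)) n = avgDisc F b (fun k => Q (fc F b k)) n := by
  unfold avgDisc
  rw [filterHL_congr F Q h]
  congr 1
  apply Finset.sum_congr rfl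
  intro k hk
  have hkn : k < n := Finset.mem_range.1 (Finset.mem_filter.1 hk).1
  exact disc_congr F (fun i hi => h i (lt_of_le_of_lt hi hkn))

open Classical in
/-- The bad event: at some time `n`, one of the two groups has at least `N`
members so far and its running mean discrepancy is at least `1/4` away from `0`. -/
noncomputable def badSet (N : ℕ) : Set (ℕ → Bool) :=
  {a | ∃ n,
    (N ≤ ((Finset.range n).filter (fun k => 1/2 ≤ fc F a k)).card ∧
      avgDisc F a (fun k => 1/2 ≤ fc F a k) n ≤ -(1/4)) ∨
    (N ≤ ((Finset.range n).filter (fun k => fc F a k < 1/2)).card ∧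
      (1/4 : ℝ) ≤ avgDisc F a (fun k => fc F a k < 1/2) n)}

lemma cyl_mem_nhds (a : ℕ → Bool) (n : ℕ) :
    {b : ℕ → Bool | ∀ i < n, a i = b i} ∈ 𝓝 a := by
  have hpi : Set.pi {i | i < n} (fun i => {a i}) ∈ 𝓝 a :=
    set_pi_mem_nhds (Set.finite_lt_nat n)
      (fun i _ => IsOpen.mem_nhds (isOpen_discrete _) rfl)
  exact Filter.mem_of_superset hpi (fun b hb i hi => (hb i hi).symm)

lemma isOpen_badSet (N : ℕ) : IsOpen (badSet F N) := by
  have hrw : badSet F N = ⋃ n, {a : ℕ → Bool |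
    (N ≤ ((Finset.range n).filter (fun k => 1/2 ≤ fc F a k)).card ∧
      avgDisc F a (fun k => 1/2 ≤ fc F a k) n ≤ -(1/4)) ∨
    (N ≤ ((Finset.range n).filter (fun k => fc F a k < 1/2)).card ∧
      (1/4 : ℝ) ≤ avgDisc F a (fun k => fc F a k < 1/2) n)} := by
    ext a
    simp [badSet, Set.mem_iUnion]
  rw [hrw]
  refine isOpen_iUnion (fun n => ?_)
  rw [isOpen_iff_mem_nhds]
  intro a ha
  filter_upwards [cyl_mem_nhds a n] with b hb
  have hfhi := filterHL_congr F (fun x => 1/2 ≤ x) hb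
  have hflo := filterHL_congr F (fun x => x < 1/2) hb
  have hahi := avgDisc_congr F (fun x => 1/2 ≤ x) hb
  have halo := avgDisc_congr F (fun x => x < 1/2) hb
  rcases ha with ⟨h1, h2⟩ | ⟨h1, h2⟩
  · exact Or.inl ⟨by rw [← hfhi]; exact h1, by rw [← hahi]; exact h2⟩
  · exact Or.inr ⟨by rw [← hflo]; exact h1, by rw [← halo]; exact h2⟩

lemma exists_card_ge (p : ℕ → Prop) (hp : {k | p k}.Infinite) (c : ℕ) :
    ∃ n, c ≤ ((Finset.range n).filter p).card := by
  obtain ⟨t, hts, htc⟩ := hp.exists_subset_card_eq c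
  refine ⟨t.sup id + 1, ?_⟩
  rw [← htc]
  apply Finset.card_le_card
  intro k hk
  simp only [Finset.mem_filter, Finset.mem_range]
  exact ⟨Nat.lt_succ_of_le (Finset.le_sup (f := id) hk),
    hts (Finset.mem_coe.2 hk)⟩

lemma avg_le_bound (a : ℕ → Bool) (p : ℕ → Prop) (m n : ℕ)
    (hbd : ∀ k, -1 ≤ disc F a k ∧ disc F a k ≤ 1)
    (hd : ∀ k, m ≤ k → p k → disc F a k ≤ -(1/2))
    (hc : 6 * m + 1 ≤ ((Finset.range n).filter p).card) :
    avgDisc F a p n ≤ -(1/4) := by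
  unfold avgDisc
  set t := (Finset.range n).filter p with ht
  set c := t.card with hcdef
  have hc0 : 0 < (c : ℝ) := by
    have : 0 < c := lt_of_lt_of_le (Nat.succ_pos _) hc
    exact_mod_cast this
  rw [div_le_iff₀ hc0]
  set t1 := t.filter (fun k => k < m) with ht1
  set t2 := t.filter (fun k => ¬ k < m) with ht2
  have hsplit : ∑ k ∈ t1, disc F a k + ∑ k ∈ t2, disc F a k = ∑ k ∈ t, disc F a k :=
    Finset.sum_filter_add_sum_filter_not t _ _
  have hcard : t1.card + t2.card = c :=
    Finset.card_filter_add_card_filter_not _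
  have ht1m : t1.card ≤ m := by
    have : t1 ⊆ Finset.range m := by
      intro k hk
      exact Finset.mem_range.2 (Finset.mem_filter.1 hk).2
    simpa using Finset.card_le_card this
  have hs1 : ∑ k ∈ t1, disc F a k ≤ (t1.card : ℝ) * 1 := by
    have := Finset.sum_le_card_nsmul t1 (fun k => disc F a k) 1
      (fun k _ => (hbd k).2)
    simpa [nsmul_eq_mul] using this
  have hs2 : ∑ k ∈ t2, disc F a k ≤ (t2.card : ℝ) * (-(1/2)) := by
    have := Finset.sum_le_card_nsmul t2 (fun k => disc F a k) (-(1/2))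
      (fun k hk => by
        have hk' := Finset.mem_filter.1 hk
        exact hd k (Nat.le_of_not_lt hk'.2) (Finset.mem_filter.1 hk'.1).2)
    simpa [nsmul_eq_mul] using this
  have hcR : (6 * m + 1 : ℝ) ≤ (c : ℝ) := by exact_mod_cast hc
  have h1R : (t1.card : ℝ) ≤ (m : ℝ) := by exact_mod_cast ht1m
  have hcardR : (t1.card : ℝ) + (t2.card : ℝ) = (c : ℝ) := by exact_mod_cast hcard
  nlinarith [hs1, hs2, hsplit, hcR, h1R, hcardR]

lemma avg_ge_bound (a : ℕ → Bool) (p : ℕ → Prop) (m n : ℕ)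
    (hbd : ∀ k, -1 ≤ disc F a k ∧ disc F a k ≤ 1)
    (hd : ∀ k, m ≤ k → p k → (1/2 : ℝ) ≤ disc F a k)
    (hc : 6 * m + 1 ≤ ((Finset.range n).filter p).card) :
    (1/4 : ℝ) ≤ avgDisc F a p n := by
  unfold avgDisc
  set t := (Finset.range n).filter p with ht
  set c := t.card with hcdef
  have hc0 : 0 < (c : ℝ) := by
    have : 0 < c := lt_of_lt_of_le (Nat.succ_pos _) hc
    exact_mod_cast this
  rw [le_div_iff₀ hc0]
  set t1 := t.filter (fun k => k < m) with ht1
  set t2 := t.filter (fun k => ¬ k < m) with ht2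
  have hsplit : ∑ k ∈ t1, disc F a k + ∑ k ∈ t2, disc F a k = ∑ k ∈ t, disc F a k :=
    Finset.sum_filter_add_sum_filter_not t _ _
  have hcard : t1.card + t2.card = c :=
    Finset.card_filter_add_card_filter_not _
  have ht1m : t1.card ≤ m := by
    have : t1 ⊆ Finset.range m := by
      intro k hk
      exact Finset.mem_range.2 (Finset.mem_filter.1 hk).2
    simpa using Finset.card_le_card this
  have hs1 : (t1.card : ℝ) * (-1) ≤ ∑ k ∈ t1, disc F a k := by
    have := Finset.card_nsmul_le_sum t1 (fun k => disc F a k) (-1)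
      (fun k _ => (hbd k).1)
    simpa [nsmul_eq_mul] using this
  have hs2 : (t2.card : ℝ) * (1/2) ≤ ∑ k ∈ t2, disc F a k := by
    have := Finset.card_nsmul_le_sum t2 (fun k => disc F a k) (1/2)
      (fun k hk => by
        have hk' := Finset.mem_filter.1 hk
        exact hd k (Nat.le_of_not_lt hk'.2) (Finset.mem_filter.1 hk'.1).2)
    simpa [nsmul_eq_mul] using this
  have hcR : (6 * m + 1 : ℝ) ≤ (c : ℝ) := by exact_mod_cast hc
  have h1R : (t1.card : ℝ) ≤ (m : ℝ) := by exact_mod_cast ht1m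
  have hcardR : (t1.card : ℝ) + (t2.card : ℝ) = (c : ℝ) := by exact_mod_cast hcard
  nlinarith [hs1, hs2, hsplit, hcR, h1R, hcardR]

lemma advFrom_lt {a : ℕ → Bool} {m i : ℕ} (h : i < m) : advFrom F a m i = a i := by
  rw [advFrom]
  simp [h]

lemma advFrom_ge {a : ℕ → Bool} {m k : ℕ} (h : m ≤ k) :
    advFrom F a m k = (if fc F (advFrom F a m) k < 1/2 then true else false) := by
  conv_lhs => rw [advFrom]
  rw [if_neg (Nat.not_lt.2 h)]
  rfl

lemma advFrom_mem_badSet (hF : ∀ w, F w ∈ Set.Icc (0 : ℝ) 1)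
    (a : ℕ → Bool) (m N : ℕ) : advFrom F a m ∈ badSet F N := by
  set b := advFrom F a m with hbdef
  have hfc01 : ∀ k, fc F b k ∈ Set.Icc (0 : ℝ) 1 := fun k => hF _
  have hbd : ∀ k, -1 ≤ disc F b k ∧ disc F b k ≤ 1 := by
    intro k
    have := hfc01 k
    unfold disc
    rcases Set.mem_Icc.1 this with ⟨h0, h1⟩
    by_cases hb : b k <;> simp [hb] <;> constructor <;> linarith
  have hhi : ∀ k, m ≤ k → (1/2 : ℝ) ≤ fc F b k → disc F b k ≤ -(1/2) := by
    intro k hk hfc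
    have hbk : b k = false := by
      rw [hbdef, advFrom_ge F hk, if_neg (not_lt.2 hfc)]
    unfold disc
    rw [hbk]
    simp
    linarith
  have hlo : ∀ k, m ≤ k → fc F b k < 1/2 → (1/2 : ℝ) ≤ disc F b k := by
    intro k hk hfc
    have hbk : b k = true := by
      rw [hbdef, advFrom_ge F hk, if_pos hfc]
    unfold disc
    rw [hbk]
    simp
    linarith
  by_cases hinf : {k | 1/2 ≤ fc F b k}.Infinite
  · obtain ⟨n, hn⟩ := exists_card_ge (fun k => 1/2 ≤ fc F b k) hinf (max (6 * m + 1) N)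
    refine ⟨n, Or.inl ⟨le_trans (le_max_right _ _) hn, ?_⟩⟩
    exact avg_le_bound F b _ m n hbd hhi (le_trans (le_max_left _ _) hn)
  · have hloinf : {k | fc F b k < 1/2}.Infinite := by
      have hcpl : {k | fc F b k < 1/2} = {k | 1/2 ≤ fc F b k}ᶜ := by
        ext k; simp [not_le]
      rw [hcpl]
      exact (Set.not_infinite.1 hinf).infinite_compl
    obtain ⟨n, hn⟩ := exists_card_ge (fun k => fc F b k < 1/2) hloinf (max (6 * m + 1) N)
    refine ⟨n, Or.inr ⟨le_trans (le_max_right _ _) hn, ?_⟩⟩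
    exact avg_ge_bound F b _ m n hbd hlo (le_trans (le_max_left _ _) hn)

lemma badSet_dense (hF : ∀ w, F w ∈ Set.Icc (0 : ℝ) 1) (N : ℕ) :
    Dense (badSet F N) := by
  intro a
  rw [mem_closure_iff_nhds]
  intro s hs
  rw [nhds_pi] at hs
  obtain ⟨I, hIfin, t, ht, hsub⟩ := Filter.mem_pi.1 hs
  obtain ⟨m, hm⟩ := hIfin.bddAbove
  set b := advFrom F a (m + 1) with hbdef
  refine ⟨b, ?_, advFrom_mem_badSet F hF a (m + 1) N⟩
  apply hsub
  intro i hi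
  have him : i < m + 1 := Nat.lt_succ_of_le (hm hi)
  have : b i = a i := advFrom_lt F him
  rw [this]
  exact mem_of_mem_nhds (ht i)

end Aux

theorem calibration_set_not_residual
    (F : List Bool → ℝ) (hF : ∀ w, F w ∈ Set.Icc (0 : ℝ) 1) :
    {a : ℕ → Bool | HighLowCalibrated F a} ∉ residual (ℕ → Bool) := by
  classical
  intro hres
  have hB : ∀ N, badSet F N ∈ residual (ℕ → Bool) := fun N =>
    residual_of_dense_open (isOpen_badSet F N) (badSet_dense F hF N)
  have hG : (⋂ N, badSet F N) ∈ residual (ℕ → Bool) :=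
    (countable_iInter_mem).2 hB
  have hne := (dense_of_mem_residual (Filter.inter_mem hres hG)).nonempty
  obtain ⟨a, hcal, hbad⟩ := hne
  rw [Set.mem_iInter] at hbad
  obtain ⟨h1, h2⟩ := hcal
  -- Refute the high-group disjunct for large N
  have E1 : ∃ C, ∀ N, C ≤ N → ∀ n,
      ¬ (N ≤ ((Finset.range n).filter (fun k => 1/2 ≤ fc F a k)).card ∧
          avgDisc F a (fun k => 1/2 ≤ fc F a k) n ≤ -(1/4)) := by
    rcases h1 with hfin | hten
    · refine ⟨hfin.toFinset.card + 1, fun N hN n ⟨hc, _⟩ => ?_⟩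
      have hsub : (Finset.range n).filter (fun k => 1/2 ≤ fc F a k) ⊆ hfin.toFinset := by
        intro k hk
        exact hfin.mem_toFinset.2 (Finset.mem_filter.1 hk).2
      have := Finset.card_le_card hsub
      omega
    · have hev : ∀ᶠ n in atTop, -(1/4 : ℝ) <
          avgDisc F a (fun k => 1/2 ≤ fc F a k) n :=
        hten.eventually (eventually_gt_nhds (by norm_num))
      obtain ⟨M, hM⟩ := eventually_atTop.1 hev
      refine ⟨M, fun N hN n ⟨hc, havg⟩ => ?_⟩
      have hnM : M ≤ n := le_trans hN (le_trans hc
        (le_trans (Finset.card_filter_le _ _) (Finset.card_range n).le))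
      exact absurd havg (not_le.2 (hM n hnM))
  have E2 : ∃ C, ∀ N, C ≤ N → ∀ n,
      ¬ (N ≤ ((Finset.range n).filter (fun k => fc F a k < 1/2)).card ∧
          (1/4 : ℝ) ≤ avgDisc F a (fun k => fc F a k < 1/2) n) := by
    rcases h2 with hfin | hten
    · refine ⟨hfin.toFinset.card + 1, fun N hN n ⟨hc, _⟩ => ?_⟩
      have hsub : (Finset.range n).filter (fun k => fc F a k < 1/2) ⊆ hfin.toFinset := by
        intro k hk
        exact hfin.mem_toFinset.2 (Finset.mem_filter.1 hk).2
      have := Finset.card_le_card hsub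
      omega
    · have hev : ∀ᶠ n in atTop,
          avgDisc F a (fun k => fc F a k < 1/2) n < (1/4 : ℝ) :=
        hten.eventually (eventually_lt_nhds (by norm_num))
      obtain ⟨M, hM⟩ := eventually_atTop.1 hev
      refine ⟨M, fun N hN n ⟨hc, havg⟩ => ?_⟩
      have hnM : M ≤ n := le_trans hN (le_trans hc
        (le_trans (Finset.card_filter_le _ _) (Finset.card_range n).le))
      exact absurd havg (not_le.2 (hM n hnM))
  obtain ⟨C1, hC1⟩ := E1
  obtain ⟨C2, hC2⟩ := E2
  obtain ⟨n, hn⟩ := hbad (max C1 C2)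
  rcases hn with h | h
  · exact hC1 _ (le_max_left _ _) n h
  · exact hC2 _ (le_max_right _ _) n h
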